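/- Let h be a nonzero complex number and R = ℂ[a,b]/(a² − ab + b², a²b − ab²). For integers d₁, d₂ ≥ 0 set a_{d₁,d₂} = (∏_{m=1}^{d₁+d₂} (a + b + m·h)) · (∏_{m=1}^{d₁} (a + m·h))^{-3} · (∏_{m=1}^{d₂} (b + m·h))^{-3} ∈ R, and set a_{d₁,d₂} = 0 if d₁ < 0 or d₂ < 0. Let J = ∑_{d₁,d₂≥0} a_{d₁,d₂} q₁^{d₁} q₂^{d₂} ∈ R[[q₁,q₂]], and let E_a, E_b : R[[q₁,q₂]] → R[[q₁,q₂]] be the ℂ-linear operators multiplying the coefficient of q₁^{d₁} q₂^{d₂} by (a + d₁·h) and by (b + d₂·h) respectively. Then (E_a E_b² − E_a² E_b) J = q₂·(E_a J) − q₁·(E_b J); equivalently, for all d₁, d₂ ≥ 0 not both zero, a_{d₁,d₂}·((a+d₁h)(b+d₂h)² − (a+d₁h)²(b+d₂h)) = a_{d₁,d₂−1}·(a+d₁h) − a_{d₁−1,d₂}·(b+d₂h). This is the second quantum differential equation D₂J = 0 of the flag manifold F₃, where D₂ = h³∂₁∂₂² − h³∂₁²∂₂ − q₂h∂₁ + q₁h∂₂.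 -/

import Mathlib

/-!
Put `α = a + d₁h`, `β = b + d₂h` and `σ = α + β = a + b + (d₁ + d₂)h`. The product formula gives
`a_{d₁,d₂} β³ = a_{d₁,d₂-1} σ` and `a_{d₁,d₂} α³ = a_{d₁-1,d₂} σ`; on the boundary `d₂ = 0`
(resp. `d₁ = 0`) both sides vanish because `b³ = 0` (resp. `a³ = 0`). Multiplied by `σ`, the
recursion becomes `a_{d₁,d₂} (αβ³ - α³β) = a_{d₁,d₂-1} σ α - a_{d₁-1,d₂} σ β`, a consequence of
these two identities, and `σ` is a unit unless `d₁ = d₂ = 0`, where the recursion is the relation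
`a²b = ab²`. The operator identity is the recursion read coefficientwise.
-/

/-- The cohomology ring `H^*(F₃;ℂ) = ℂ[a,b]/(a² − ab + b², a²b − ab²)` of the full flag
manifold `F₃ = F_{1,2}(ℂ³)`. -/
noncomputable abbrev FlagCohomology : Type :=
  MvPolynomial (Fin 2) ℂ ⧸ Ideal.span
    {(MvPolynomial.X 0 : MvPolynomial (Fin 2) ℂ) ^ 2
        - MvPolynomial.X 0 * MvPolynomial.X 1 + MvPolynomial.X 1 ^ 2,
      (MvPolynomial.X 0 : MvPolynomial (Fin 2) ℂ) ^ 2 * MvPolynomial.X 1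
        - MvPolynomial.X 0 * MvPolynomial.X 1 ^ 2}

/-- The degree-two generator `a`. -/
noncomputable abbrev flagA : FlagCohomology :=
  Ideal.Quotient.mk _ (MvPolynomial.X 0)

/-- The degree-two generator `b`. -/
noncomputable abbrev flagB : FlagCohomology :=
  Ideal.Quotient.mk _ (MvPolynomial.X 1)

open MvPowerSeries

section JCoefficients

variable {K R : Type*} [Field K] [CommRing R] [Algebra K R]

lemma mul_sub_eq_of_mul_pow_three_eq {A A₁ A₂ α β : R} (hσ : IsUnit (α + β))
    (hα : A * α ^ 3 = A₁ * (α + β)) (hβ : A * β ^ 3 = A₂ * (α + β)) :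
    A * (α * β ^ 2 - α ^ 2 * β) = A₂ * α - A₁ * β := by
  refine hσ.mul_left_cancel ?_
  linear_combination α * hβ - β * hα

lemma isUnit_add_algebraMap {x : R} (hx : IsNilpotent x) {c : K} (hc : c ≠ 0) :
    IsUnit (x + algebraMap K R c) :=
  hx.isUnit_add_right_of_commute ((isUnit_iff_ne_zero.mpr hc).map _) (Commute.all _ _)

noncomputable def shiftedProd (x : R) (h : K) (n : ℕ) : R :=
  ∏ k ∈ Finset.range n, (x + algebraMap K R (((k : K) + 1) * h))

lemma shiftedProd_succ (x : R) (h : K) (n : ℕ) :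
    shiftedProd x h (n + 1) = shiftedProd x h n * (x + algebraMap K R (((n + 1 : ℕ) : K) * h)) := by
  rw [shiftedProd, Finset.prod_range_succ, Nat.cast_succ]
  rfl

/-- The coefficient `a_{d₁,d₂}` of `J`, with `x`, `y` in place of `a`, `b`. -/
noncomputable def jCoeff (x y : R) (h : K) (d₁ d₂ : ℕ) : R :=
  shiftedProd (x + y) h (d₁ + d₂) * Ring.inverse (shiftedProd x h d₁) ^ 3 *
    Ring.inverse (shiftedProd y h d₂) ^ 3

lemma jCoeff_swap (x y : R) (h : K) (d₁ d₂ : ℕ) : jCoeff y x h d₂ d₁ = jCoeff x y h d₁ d₂ := by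
  rw [jCoeff, jCoeff, add_comm y, add_comm d₂]
  ring

lemma jCoeff_succ_right_mul_pow_three [CharZero K] (x : R) {y : R} (hy : IsNilpotent y) {h : K}
    (hh : h ≠ 0) (d₁ d₂ : ℕ) :
    jCoeff x y h d₁ (d₂ + 1) * (y + algebraMap K R (((d₂ + 1 : ℕ) : K) * h)) ^ 3 =
      jCoeff x y h d₁ d₂ * (x + y + algebraMap K R (((d₁ + d₂ + 1 : ℕ) : K) * h)) := by
  have hunit := isUnit_add_algebraMap hy (mul_ne_zero (Nat.cast_ne_zero.mpr d₂.succ_ne_zero) hh)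
  rw [jCoeff, jCoeff, shiftedProd_succ y, ← Nat.add_assoc, shiftedProd_succ (x + y),
    Ring.mul_inverse_rev, mul_pow]
  generalize y + algebraMap K R (((d₂ + 1 : ℕ) : K) * h) = β at hunit ⊢
  have hβ : Ring.inverse β ^ 3 * β ^ 3 = 1 := by
    rw [Ring.inverse_pow]
    exact Ring.inverse_mul_cancel _ (hunit.pow 3)
  linear_combination (shiftedProd (x + y) h (d₁ + d₂) * Ring.inverse (shiftedProd x h d₁) ^ 3 *
    Ring.inverse (shiftedProd y h d₂) ^ 3 *
      (x + y + algebraMap K R (((d₁ + d₂ + 1 : ℕ) : K) * h))) * hβ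

variable [CharZero K] {x y : R} {h : K} {A : ℤ → ℤ → R}

lemma mul_pow_three_right_eq_of_jCoeff (hy : y ^ 3 = 0) (hh : h ≠ 0)
    (hA : ∀ d₁ d₂ : ℕ, A d₁ d₂ = jCoeff x y h d₁ d₂)
    (hA0 : ∀ d₁ d₂ : ℤ, d₁ < 0 ∨ d₂ < 0 → A d₁ d₂ = 0) (d₁ d₂ : ℕ) :
    A d₁ d₂ * (y + algebraMap K R ((d₂ : K) * h)) ^ 3 =
      A d₁ (d₂ - 1) * (x + y + algebraMap K R (((d₁ + d₂ : ℕ) : K) * h)) := by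
  cases d₂ with
  | zero => simp [hy, hA0 d₁ (-1) (Or.inr neg_one_lt_zero)]
  | succ d₂ =>
    rw [show ((d₂ + 1 : ℕ) : ℤ) - 1 = d₂ by push_cast; ring, hA, hA]
    exact jCoeff_succ_right_mul_pow_three x ⟨3, hy⟩ hh d₁ d₂

lemma mul_pow_three_left_eq_of_jCoeff (hx : x ^ 3 = 0) (hh : h ≠ 0)
    (hA : ∀ d₁ d₂ : ℕ, A d₁ d₂ = jCoeff x y h d₁ d₂)
    (hA0 : ∀ d₁ d₂ : ℤ, d₁ < 0 ∨ d₂ < 0 → A d₁ d₂ = 0) (d₁ d₂ : ℕ) :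
    A d₁ d₂ * (x + algebraMap K R ((d₁ : K) * h)) ^ 3 =
      A (d₁ - 1) d₂ * (x + y + algebraMap K R (((d₁ + d₂ : ℕ) : K) * h)) := by
  have := mul_pow_three_right_eq_of_jCoeff (A := fun i j ↦ A j i) hx hh
    (fun i j ↦ (hA j i).trans (jCoeff_swap x y h j i).symm)
    (fun i j hij ↦ hA0 j i hij.symm) d₂ d₁
  rwa [add_comm y x, add_comm d₂ d₁] at this

theorem jCoeff_recursion (hx : x ^ 3 = 0) (hy : y ^ 3 = 0) (hxy : x ^ 2 * y = x * y ^ 2)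
    (hh : h ≠ 0) (hA : ∀ d₁ d₂ : ℕ, A d₁ d₂ = jCoeff x y h d₁ d₂)
    (hA0 : ∀ d₁ d₂ : ℤ, d₁ < 0 ∨ d₂ < 0 → A d₁ d₂ = 0) (d₁ d₂ : ℕ) :
    A d₁ d₂ * ((x + algebraMap K R ((d₁ : K) * h)) * (y + algebraMap K R ((d₂ : K) * h)) ^ 2
        - (x + algebraMap K R ((d₁ : K) * h)) ^ 2 * (y + algebraMap K R ((d₂ : K) * h))) =
      A d₁ (d₂ - 1) * (x + algebraMap K R ((d₁ : K) * h))
        - A (d₁ - 1) d₂ * (y + algebraMap K R ((d₂ : K) * h)) := by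
  by_cases hd : d₁ + d₂ = 0
  · obtain ⟨rfl, rfl⟩ : d₁ = 0 ∧ d₂ = 0 := by omega
    simp [hxy, hA0 0 (-1) (Or.inr neg_one_lt_zero), hA0 (-1) 0 (Or.inl neg_one_lt_zero)]
  have hσ : (x + algebraMap K R ((d₁ : K) * h)) + (y + algebraMap K R ((d₂ : K) * h)) =
      x + y + algebraMap K R (((d₁ + d₂ : ℕ) : K) * h) := by
    rw [Nat.cast_add, add_mul, map_add]
    ring
  refine mul_sub_eq_of_mul_pow_three_eq ?_ ?_ ?_
  · rw [hσ]
    exact isUnit_add_algebraMap ((Commute.all x y).isNilpotent_add ⟨3, hx⟩ ⟨3, hy⟩)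
      (mul_ne_zero (Nat.cast_ne_zero.mpr hd) hh)
  · rw [hσ]
    exact mul_pow_three_left_eq_of_jCoeff hx hh hA hA0 d₁ d₂
  · rw [hσ]
    exact mul_pow_three_right_eq_of_jCoeff hy hh hA hA0 d₁ d₂

end JCoefficients

lemma coeff_X_mul_eq_of_coeff_eq {S : Type*} [Semiring S] {B : ℤ → ℤ → S}
    (hB0 : ∀ d₁ d₂ : ℤ, d₁ < 0 ∨ d₂ < 0 → B d₁ d₂ = 0) {F : MvPowerSeries (Fin 2) S}
    (hF : ∀ s : Fin 2 →₀ ℕ, coeff s F = B (s 0) (s 1)) (s : Fin 2 →₀ ℕ) :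
    coeff s (X 0 * F) = B (s 0 - 1) (s 1) ∧ coeff s (X 1 * F) = B (s 0) (s 1 - 1) := by
  simp only [X, coeff_monomial_mul, one_mul, Finsupp.single_le_iff, hF]
  constructor
  · split_ifs with hs
    · simp [Nat.cast_sub hs]
    · exact (hB0 _ _ (Or.inl (by omega))).symm
  · split_ifs with hs
    · simp [Nat.cast_sub hs]
    · exact (hB0 _ _ (Or.inr (by omega))).symm

lemma flagA_pow_three : flagA ^ 3 = 0 := by
  rw [← map_pow, Ideal.Quotient.eq_zero_iff_mem]
  exact Ideal.mem_span_pair.mpr ⟨MvPolynomial.X 0, 1, by ring⟩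

lemma flagB_pow_three : flagB ^ 3 = 0 := by
  rw [← map_pow, Ideal.Quotient.eq_zero_iff_mem]
  exact Ideal.mem_span_pair.mpr ⟨MvPolynomial.X 1, -1, by ring⟩

lemma flagA_sq_mul_flagB : flagA ^ 2 * flagB = flagA * flagB ^ 2 := by
  rw [← sub_eq_zero, ← map_pow, ← map_pow, ← map_mul, ← map_mul, ← map_sub,
    Ideal.Quotient.eq_zero_iff_mem]
  exact Ideal.mem_span_pair.mpr ⟨0, 1, by ring⟩

theorem stmt_5 (h : ℂ) (hh : h ≠ 0)
    -- the coefficients `a_{d₁,d₂}`, extended by zero to negative indices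
    (A : ℤ → ℤ → FlagCohomology)
    (hA : ∀ d₁ d₂ : ℕ, A d₁ d₂ =
      (∏ k ∈ Finset.range (d₁ + d₂),
          (flagA + flagB + algebraMap ℂ FlagCohomology (((k : ℂ) + 1) * h))) *
        Ring.inverse (∏ k ∈ Finset.range d₁,
          (flagA + algebraMap ℂ FlagCohomology (((k : ℂ) + 1) * h))) ^ 3 *
        Ring.inverse (∏ k ∈ Finset.range d₂,
          (flagB + algebraMap ℂ FlagCohomology (((k : ℂ) + 1) * h))) ^ 3)
    (hA0 : ∀ d₁ d₂ : ℤ, d₁ < 0 ∨ d₂ < 0 → A d₁ d₂ = 0)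
    -- `J = ∑ a_{d₁,d₂} q₁^{d₁} q₂^{d₂}`
    (J : MvPowerSeries (Fin 2) FlagCohomology)
    (hJ : ∀ s : Fin 2 →₀ ℕ, MvPowerSeries.coeff s J = A (s 0) (s 1))
    -- the operators `E_a`, `E_b` multiplying the coefficient of `q₁^{d₁} q₂^{d₂}`
    -- by `a + d₁·h` and `b + d₂·h` respectively
    (Ea Eb : MvPowerSeries (Fin 2) FlagCohomology → MvPowerSeries (Fin 2) FlagCohomology)
    (hEa : ∀ F s, MvPowerSeries.coeff s (Ea F) =
      (flagA + algebraMap ℂ FlagCohomology ((s 0 : ℂ) * h)) * MvPowerSeries.coeff s F)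
    (hEb : ∀ F s, MvPowerSeries.coeff s (Eb F) =
      (flagB + algebraMap ℂ FlagCohomology ((s 1 : ℂ) * h)) * MvPowerSeries.coeff s F) :
    -- `(E_a E_b² − E_a² E_b) J = q₂ (E_a J) − q₁ (E_b J)`
    Ea (Eb (Eb J)) - Ea (Ea (Eb J))
        = MvPowerSeries.X 1 * Ea J - MvPowerSeries.X 0 * Eb J ∧
    -- equivalently, the coefficient recursion
    ∀ d₁ d₂ : ℤ, 0 ≤ d₁ → 0 ≤ d₂ → ¬(d₁ = 0 ∧ d₂ = 0) →
      A d₁ d₂ *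
        ((flagA + algebraMap ℂ FlagCohomology ((d₁ : ℂ) * h))
            * (flagB + algebraMap ℂ FlagCohomology ((d₂ : ℂ) * h)) ^ 2
          - (flagA + algebraMap ℂ FlagCohomology ((d₁ : ℂ) * h)) ^ 2
              * (flagB + algebraMap ℂ FlagCohomology ((d₂ : ℂ) * h)))
        = A d₁ (d₂ - 1) * (flagA + algebraMap ℂ FlagCohomology ((d₁ : ℂ) * h))
          - A (d₁ - 1) d₂ * (flagB + algebraMap ℂ FlagCohomology ((d₂ : ℂ) * h)) := by
  have hrec := jCoeff_recursion flagA_pow_three flagB_pow_three flagA_sq_mul_flagB hh hA hA0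
  refine ⟨?_, fun d₁ d₂ h₁ h₂ _ ↦ ?_⟩
  · have hvanish : ∀ (c : ℤ → ℤ → FlagCohomology) (d₁ d₂ : ℤ), d₁ < 0 ∨ d₂ < 0 →
        c d₁ d₂ * A d₁ d₂ = 0 := fun c d₁ d₂ hd ↦ by rw [hA0 d₁ d₂ hd, mul_zero]
    ext s
    have hX0 := (coeff_X_mul_eq_of_coeff_eq
      (hvanish fun _ d₂ ↦ flagB + algebraMap ℂ FlagCohomology ((d₂ : ℂ) * h))
      (fun s ↦ by rw [hEb, hJ, Int.cast_natCast]) s).1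
    have hX1 := (coeff_X_mul_eq_of_coeff_eq
      (hvanish fun d₁ _ ↦ flagA + algebraMap ℂ FlagCohomology ((d₁ : ℂ) * h))
      (fun s ↦ by rw [hEa, hJ, Int.cast_natCast]) s).2
    simp only [map_sub, hX0, hX1, hEa, hEb, hJ, Int.cast_natCast]
    linear_combination hrec (s 0) (s 1)
  · lift d₁ to ℕ using h₁
    lift d₂ to ℕ using h₂
    simpa using hrec d₁ d₂
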